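/- arXiv:2601.17928 — 2 statements merged into one kernel-verified Lean document; each statement's English description precedes it below -/
import Mathlib

section
/- Let Q be a quandle whose enveloping group G(Q) is abelian. Then G(Q) is isomorphic to the free abelian group on the set Q_conj = φ_Q(Q) (the image of the canonical map). -/
/-! If `G(R)` is abelian then `φ (x ◃ y) = φ x * φ y * (φ x)⁻¹ = φ y`, so `x ↦ [φ x]` is a rack
map into the (trivial) conjugation quandle of the free abelian group on `φ(R)` and extends to
`G(R)`. Conversely the inclusion `φ(R) ⊆ G(R)` extends to the free abelian group because `G(R)`
is abelian, and the two extensions are mutually inverse on generators. -/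

open Quandles

namespace Rack

variable {R : Type*} [Rack R]

theorem EnvelGroup.hom_ext {G : Type*} [Group G] {F₁ F₂ : EnvelGroup R →* G}
    (h : ∀ x, F₁ (toEnvelGroup R x) = F₂ (toEnvelGroup R x)) : F₁ = F₂ :=
  toEnvelGroup.map.symm.injective (DFunLike.ext _ _ h)

theorem toEnvelGroup_act_of_commute {x y : R}
    (h : Commute (toEnvelGroup R x) (toEnvelGroup R y)) :
    toEnvelGroup R (x ◃ y) = toEnvelGroup R y := by
  rw [ShelfHom.map_act, Quandle.conj_act_eq_conj, h.eq, mul_inv_cancel_right]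

def shelfHomConjOfActInvariant {G : Type*} [CommGroup G] (f : R → G)
    (hf : ∀ x y, f (x ◃ y) = f y) : R →◃ Quandle.Conj G where
  toFun := f
  map_act' {x y} := by rw [Quandle.conj_act_eq_conj, mul_inv_cancel_comm, hf]

theorem _root_.FreeAbelianGroup.multiplicative_hom_ext {α M : Type*} [CommGroup M]
    {F₁ F₂ : Multiplicative (FreeAbelianGroup α) →* M}
    (h : ∀ a, F₁ (.ofAdd (.of a)) = F₂ (.ofAdd (.of a))) : F₁ = F₂ :=
  AddMonoidHom.toMultiplicativeLeft.symm.injective (FreeAbelianGroup.lift_ext _ _ h)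

def envelGroupEquivFreeAbelianGroupOfComm (h : ∀ a b : EnvelGroup R, a * b = b * a) :
    EnvelGroup R ≃* Multiplicative (FreeAbelianGroup (Set.range (toEnvelGroup R))) :=
  letI : CommGroup (EnvelGroup R) := { mul_comm := h }
  let gen := Set.rangeFactorization (toEnvelGroup R)
  have gen_act (x y : R) : gen (x ◃ y) = gen y :=
    Subtype.ext (toEnvelGroup_act_of_commute (h _ _))
  let toFree : EnvelGroup R →* Multiplicative (FreeAbelianGroup _) :=
    toEnvelGroup.map <| shelfHomConjOfActInvariant (fun x => .ofAdd (.of (gen x))) fun x y => by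
      rw [gen_act]
  let ofFree : Multiplicative (FreeAbelianGroup _) →* EnvelGroup R :=
    AddMonoidHom.toMultiplicativeLeft (FreeAbelianGroup.lift fun s => Additive.ofMul s.1)
  have ofFree_of (s : Set.range (toEnvelGroup R)) : ofFree (.ofAdd (.of s)) = s.1 :=
    FreeAbelianGroup.lift_apply_of (fun s : Set.range (toEnvelGroup R) => Additive.ofMul s.1) s
  toFree.toMulEquiv ofFree
    (EnvelGroup.hom_ext fun x => ofFree_of (gen x))
    (FreeAbelianGroup.multiplicative_hom_ext fun ⟨_, x, rfl⟩ => by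
      simp only [MonoidHom.comp_apply, ofFree_of]; rfl)

end Rack

/-- if `G(Q)` is abelian then it is isomorphic to the free abelian group
on the set `Q_conj = φ_Q(Q)` (the image of the canonical map). -/
theorem envelGroup_abelian_iso_freeAbelianGroup (Q : Type) [Quandle Q]
    (h : ∀ a b : Rack.EnvelGroup Q, a * b = b * a) :
    Nonempty (Rack.EnvelGroup Q ≃*
      Multiplicative (FreeAbelianGroup
        (Set.range fun x : Q => (Rack.toEnvelGroup Q x : Rack.EnvelGroup Q)))) :=
  ⟨Rack.envelGroupEquivFreeAbelianGroupOfComm h⟩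
end

section
/- Let Q be a finite quandle. Then there exist n and an injective group homomorphism ρ : G(Q) → GL_n(ℤ), i.e. the enveloping group of a finite quandle admits a faithful representation over ℤ. -/
/-!
The conjugation action of `G(Q)` on `Q` has its kernel inside the centre `Z`, so `Z` has index at
most `|Q|!`; by Schreier's lemma `Z` is then a finitely generated abelian group, i.e. `ℤⁿ × T` with
`T` finite. The subgroup `ℤⁿ` acts faithfully on `ℤⁿ⁺¹` by transvections, and a faithful integral
representation of a finite-index subgroup coinduces one of the whole group: the coinduced module is
free of finite rank, and it is faithful as soon as the original module is nonzero.
-/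

open Function DirectSum

def HasFaithfulIntRep (G : Type*) [Group G] : Prop :=
  ∃ (n : ℕ) (ρ : G →* Matrix.GeneralLinearGroup (Fin n) ℤ), Injective ρ

namespace Representation

section Shear

variable (R P : Type*) [CommSemiring R] [AddCommMonoid P] [Module R P]

noncomputable def shear : Representation R (Multiplicative P) (P × R) where
  toFun v := LinearMap.transvection (LinearMap.snd R P R) (v.toAdd, 0)
  map_one' := by simp [Module.End.one_eq_id, ← Prod.zero_eq_mk]
  map_mul' v w := by
    rw [Module.End.mul_eq_comp, LinearMap.transvection.comp_of_left_eq rfl, Prod.mk_add_mk,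
      add_zero, toAdd_mul]

variable {R P}

theorem shear_apply (v : Multiplicative P) (x : P × R) :
    shear R P v x = (x.1 + x.2 • v.toAdd, x.2) := by
  ext <;> simp [shear, LinearMap.transvection.apply]

theorem shear_injective : Injective (shear R P) := fun v w h ↦ by
  simpa [shear_apply] using LinearMap.congr_fun h (0, 1)

end Shear

section Coinduction

variable {k G A : Type*} [CommRing k] [Group G] {S : Subgroup G} [AddCommGroup A] [Module k A]
  (σ : Representation k S A)

theorem coind_injective [Nontrivial A] (hσ : Injective σ) : Injective (coind S.subtype σ) := by
  classical
  refine (injective_iff_map_eq_one _).2 fun g hg ↦ ?_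
  -- test `g` against the function supported on `S` that sends `s` to `σ s a`
  have key (a : A) : (if h : g ∈ S then σ ⟨g, h⟩ a else 0) = a := by
    let f : coindV S.subtype σ := ⟨fun x ↦ if h : x ∈ S then σ ⟨x, h⟩ a else 0, fun s x ↦ by
      by_cases hx : x ∈ S
      · dsimp only
        rw [dif_pos hx, dif_pos (S.mul_mem s.2 hx : S.subtype s * x ∈ S), ← Module.End.mul_apply,
          ← map_mul]
        rfl
      · simp [hx, S.mul_mem_cancel_left s.2]⟩
    have h := congr_arg (fun f : coindV S.subtype σ ↦ f.1 1) (LinearMap.congr_fun hg f)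
    change (if h : 1 * g ∈ S then σ ⟨1 * g, h⟩ a else 0) =
      if h : (1 : G) ∈ S then σ ⟨1, h⟩ a else 0 at h
    simpa [show (⟨1, S.one_mem⟩ : S) = 1 from rfl] using h
  by_cases hg : g ∈ S
  · have : σ ⟨g, hg⟩ = σ 1 := LinearMap.ext fun a ↦ by simpa [hg] using key a
    simpa using congr_arg Subtype.val (hσ this)
  · obtain ⟨a, ha⟩ := exists_ne (0 : A)
    exact (ha (by simpa [hg] using (key a).symm)).elim

noncomputable def coindVToCosetReps :
    coindV S.subtype σ →ₗ[k] Quotient (QuotientGroup.rightRel S) → A where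
  toFun f c := f.1 c.out
  map_add' _ _ := rfl
  map_smul' _ _ := rfl

theorem coindVToCosetReps_injective : Injective (coindVToCosetReps σ) := by
  refine (injective_iff_map_eq_zero _).2 fun f hf ↦ Subtype.ext (funext fun x ↦ ?_)
  let c : Quotient (QuotientGroup.rightRel S) := ⟦x⟧
  have hx : x * c.out⁻¹ ∈ S := QuotientGroup.rightRel_apply.1 (Quotient.mk_out x)
  show f.1 x = 0
  calc f.1 x = f.1 (S.subtype ⟨_, hx⟩ * c.out) := by simp
    _ = σ ⟨_, hx⟩ (f.1 c.out) := f.2 _ _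
    _ = 0 := by rw [show f.1 c.out = 0 from congr_fun hf c, map_zero]

theorem isTorsionFree_coindV [Module.IsTorsionFree k A] :
    Module.IsTorsionFree k (coindV S.subtype σ) :=
  (coindVToCosetReps_injective σ).moduleIsTorsionFree _ (map_smul _)

theorem finite_coindV [IsNoetherianRing k] [Module.Finite k A] [S.FiniteIndex] :
    Module.Finite k (coindV S.subtype σ) :=
  have : Finite (Quotient (QuotientGroup.rightRel S)) :=
    .of_equiv _ (QuotientGroup.quotientRightRelEquivQuotientLeftRel S).symm
  .of_injective _ (coindVToCosetReps_injective σ)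

end Coinduction

end Representation

namespace HasFaithfulIntRep

variable {G H : Type*} [Group G] [Group H]

theorem of_injective (f : G →* H) (hf : Injective f) (h : HasFaithfulIntRep H) :
    HasFaithfulIntRep G :=
  let ⟨n, ρ, hρ⟩ := h
  ⟨n, ρ.comp f, hρ.comp hf⟩

theorem of_representation {V : Type*} [AddCommGroup V] [Module.Free ℤ V] [Module.Finite ℤ V]
    (ρ : Representation ℤ G V) (hρ : Injective ρ) : HasFaithfulIntRep G := by
  let toMatrix := LinearMap.toMatrixAlgEquiv (Module.finBasis ℤ V)
  refine ⟨_, (toMatrix.toMonoidHom.comp ρ).toHomUnits, fun g g' h ↦ hρ (toMatrix.injective ?_)⟩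
  simpa using congr_arg Units.val h

theorem exists_representation (h : HasFaithfulIntRep G) :
    ∃ (n : ℕ) (ρ : Representation ℤ G (Fin n → ℤ)), Injective ρ := by
  obtain ⟨n, ρ, hρ⟩ := h
  refine ⟨n, Matrix.toLinAlgEquiv'.toMonoidHom.comp ((Units.coeHom _).comp ρ), fun g g' h ↦ hρ ?_⟩
  exact Units.ext (Matrix.toLinAlgEquiv'.injective h)

theorem multiplicative_finsupp (n : ℕ) : HasFaithfulIntRep (Multiplicative (Fin n →₀ ℤ)) :=
  of_representation _ Representation.shear_injective

theorem of_finiteIndex (K : Subgroup G) [K.FiniteIndex] (h : HasFaithfulIntRep K) :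
    HasFaithfulIntRep G := by
  obtain ⟨n, σ, hσ⟩ := h.exists_representation
  let σ' := σ.prod (Representation.trivial ℤ K ℤ)
  have hσ' : Injective σ' := fun a b hab ↦ hσ <| LinearMap.ext fun x ↦
    congr_arg Prod.fst (LinearMap.congr_fun hab (x, 0))
  have := σ'.finite_coindV
  have := σ'.isTorsionFree_coindV
  exact of_representation _ (σ'.coind_injective hσ')

end HasFaithfulIntRep

theorem hasFaithfulIntRep_of_isMulCommutative (A : Type*) [Group A] [IsMulCommutative A]
    [Group.FG A] : HasFaithfulIntRep A := by
  open scoped IsMulCommutative in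
  obtain ⟨n, ι, _, p, hp, e, ⟨f⟩⟩ := AddCommGroup.equiv_free_prod_directSum_zmod (Additive A)
  have (i : ι) : NeZero (p i ^ e i) := ⟨pow_ne_zero _ (hp i).ne_zero⟩
  have : Finite (⨁ i, ZMod (p i ^ e i)) := .of_equiv _ DFinsupp.equivFunOnFintype.symm
  let torsionPart := ((AddMonoidHom.snd _ _).comp f.toAddMonoidHom).toMultiplicativeRight
  let freePart := ((AddMonoidHom.fst _ _).comp f.toAddMonoidHom).toMultiplicativeRight
  have : Injective (freePart.comp torsionPart.ker.subtype) := by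
    refine (injective_iff_map_eq_one _).2 fun a ha ↦ Subtype.ext ?_
    have : f (Additive.ofMul a.1) = 0 :=
      Prod.ext (congr_arg Multiplicative.toAdd ha) (congr_arg Multiplicative.toAdd a.2)
    simpa using this
  exact (HasFaithfulIntRep.multiplicative_finsupp n).of_injective _ this |>.of_finiteIndex

namespace Rack

open Quandles

variable (R : Type*) [Rack R]

theorem closure_range_toEnvelGroup : Subgroup.closure (Set.range (toEnvelGroup R)) = ⊤ := by
  refine eq_top_iff.2 fun g _ ↦ Quotient.inductionOn g fun a ↦ ?_
  induction a with
  | unit => exact one_mem _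
  | incl x => exact Subgroup.subset_closure ⟨x, rfl⟩
  | mul a b iha ihb => exact mul_mem iha ihb
  | inv a iha => exact inv_mem iha

variable {R}

theorem toEnvelGroup_act (x y : R) :
    toEnvelGroup R (x ◃ y) = toEnvelGroup R x * toEnvelGroup R y * (toEnvelGroup R x)⁻¹ :=
  (toEnvelGroup R).map_act

theorem toEnvelGroup_envelAction (g : EnvelGroup R) (y : R) :
    toEnvelGroup R (envelAction g y) = g * toEnvelGroup R y * g⁻¹ := by
  have hg : g ∈ Subgroup.closure (Set.range (toEnvelGroup R)) :=
    closure_range_toEnvelGroup R ▸ Subgroup.mem_top g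
  induction hg using Subgroup.closure_induction generalizing y with
  | mem _ hx =>
    obtain ⟨x, rfl⟩ := hx
    exact toEnvelGroup_act x y
  | one => simp
  | mul g h _ _ hg hh => simp [hg, hh, mul_assoc]
  | inv g _ hg =>
    have := hg (envelAction g⁻¹ y)
    rw [← Equiv.Perm.mul_apply, ← map_mul, mul_inv_cancel, map_one, Equiv.Perm.one_apply] at this
    rw [this]
    group

theorem ker_envelAction_le_center : envelAction.ker ≤ Subgroup.center (EnvelGroup R) := by
  intro g hg
  rw [← Subgroup.centralizer_univ, ← Subgroup.coe_top, ← closure_range_toEnvelGroup,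
    Subgroup.centralizer_closure]
  rintro _ ⟨y, rfl⟩
  have := toEnvelGroup_envelAction g y
  rw [MonoidHom.mem_ker.1 hg, Equiv.Perm.one_apply, eq_mul_inv_iff_mul_eq] at this
  exact this

instance [Finite R] : Group.FG (EnvelGroup R) := by
  classical
  have := Fintype.ofFinite R
  exact ⟨⟨Finset.univ.image (toEnvelGroup R), by simpa using closure_range_toEnvelGroup R⟩⟩

instance [Finite R] : (Subgroup.center (EnvelGroup R)).FiniteIndex :=
  Subgroup.finiteIndex_of_le ker_envelAction_le_center

end Rack

/-- the enveloping group of a finite quandle admits a faithful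
representation `G(Q) → GL_n(ℤ)` for some `n`. -/
theorem envelGroup_faithful_int_rep (Q : Type) [Quandle Q] [Fintype Q] :
    ∃ (n : ℕ) (ρ : Rack.EnvelGroup Q →* Matrix.GeneralLinearGroup (Fin n) ℤ),
      Function.Injective ρ :=
  (hasFaithfulIntRep_of_isMulCommutative (Subgroup.center (Rack.EnvelGroup Q))).of_finiteIndex
end
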